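/- For every ∀⁺ type A of System F, the interpretation of A using saturated sets (closed under weak-head-expansion) coincides with the interpretation using β-saturated sets (closed under β-expansion): the two resulting sets |A| are equal. -/

import Mathlib

/-! Untyped λ-calculus (de Bruijn) and System F realizability semantics. -/

/-- Untyped λ-terms in de Bruijn notation. -/
inductive Lam : Type
  | var : ℕ → Lam
  | app : Lam → Lam → Lam
  | lam : Lam → Lam
deriving DecidableEq

namespace Lam

/-- Shift the free variables ≥ `d` up by one. -/
def lift (d : ℕ) : Lam → Lam
  | var n => if n < d then var n else var (n + 1)
  | app t u => app (lift d t) (lift d u)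
  | lam t => lam (lift (d + 1) t)

/-- Capture-avoiding substitution of `u` for the variable `k` (de Bruijn). -/
def subst : Lam → ℕ → Lam → Lam
  | var n, k, u => if n = k then u else if k < n then var (n - 1) else var n
  | app t s, k, u => app (subst t k u) (subst s k u)
  | lam t, k, u => lam (subst t (k + 1) (lift 0 u))

/-- Free variables of a term. -/
def fv : Lam → Finset ℕ
  | var n => {n}
  | app t u => fv t ∪ fv u
  | lam t => ((fv t).erase 0).image (· - 1)

/-- One-step β-reduction. -/
inductive Beta : Lam → Lam → Prop
  | beta (t u : Lam) : Beta (app (lam t) u) (subst t 0 u)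
  | appL {t t' : Lam} (u : Lam) : Beta t t' → Beta (app t u) (app t' u)
  | appR (t : Lam) {u u' : Lam} : Beta u u' → Beta (app t u) (app t u')
  | lam {t t' : Lam} : Beta t t' → Beta (lam t) (lam t')

/-- Many-step β-reduction. -/
def BetaStar : Lam → Lam → Prop := Relation.ReflTransGen Beta

/-- β-equivalence. -/
def BetaEq : Lam → Lam → Prop := Relation.EqvGen Beta

/-- One-step η-reduction. -/
inductive Eta : Lam → Lam → Prop
  | eta (t : Lam) : Eta (lam (app (lift 0 t) (var 0))) t
  | appL {t t' : Lam} (u : Lam) : Eta t t' → Eta (app t u) (app t' u)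
  | appR (t : Lam) {u u' : Lam} : Eta u u' → Eta (app t u) (app t u')
  | lam {t t' : Lam} : Eta t t' → Eta (lam t) (lam t')

/-- βη-equivalence. -/
def BetaEtaEq : Lam → Lam → Prop := Relation.EqvGen (fun t u => Beta t u ∨ Eta t u)

/-- One-step weak head reduction: contracts the weak head redex `(λ t) u`
possibly applied to further arguments. -/
inductive Whr : Lam → Lam → Prop
  | head (t u : Lam) : Whr (app (lam t) u) (subst t 0 u)
  | appL {t t' : Lam} (u : Lam) : Whr t t' → Whr (app t u) (app t' u)

/-- Many-step weak head reduction (`≻_f`). -/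
def WhrStar : Lam → Lam → Prop := Relation.ReflTransGen Whr

/-- A term is normal when it has no β-redex. -/
def Normal (t : Lam) : Prop := ∀ u, ¬ Beta t u

def Normalizable (t : Lam) : Prop := ∃ u, BetaStar t u ∧ Normal u

/-- `(t)v₁…vₘ`. -/
def appList (t : Lam) (l : List Lam) : Lam := l.foldl app t

end Lam

/-- A set of λ-terms is saturated when it is closed under weak-head-expansion. -/
def Saturated (G : Set Lam) : Prop := ∀ t u : Lam, Lam.WhrStar t u → u ∈ G → t ∈ G

/-- A set of λ-terms is β-saturated when it is closed under β-expansion. -/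
def BetaSaturated (G : Set Lam) : Prop := ∀ t u : Lam, Lam.BetaStar t u → u ∈ G → t ∈ G

/-- `G → G' = {u : ∀ t ∈ G, (u)t ∈ G'}`. -/
def arrowSet (G G' : Set Lam) : Set Lam := {u | ∀ t ∈ G, Lam.app u t ∈ G'}

/-- Types of System F (de Bruijn type variables). -/
inductive Ty : Type
  | var : ℕ → Ty
  | arr : Ty → Ty → Ty
  | all : Ty → Ty
deriving DecidableEq

namespace Ty

/-- Shift the free type variables ≥ `d` up by one. -/
def lift (d : ℕ) : Ty → Ty
  | var n => if n < d then var n else var (n + 1)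
  | arr A B => arr (lift d A) (lift d B)
  | all A => all (lift (d + 1) A)

/-- Capture-avoiding substitution of the type `C` for the type variable `k`. -/
def subst : Ty → ℕ → Ty → Ty
  | var n, k, C => if n = k then C else if k < n then var (n - 1) else var n
  | arr A B, k, C => arr (subst A k C) (subst B k C)
  | all A, k, C => all (subst A (k + 1) (lift 0 C))

/-- Free type variables. -/
def fv : Ty → Finset ℕ
  | var n => {n}
  | arr A B => fv A ∪ fv B
  | all A => ((fv A).erase 0).image (· - 1)

end Ty

mutual
  /-- ∀⁺ types: types with positive quantifiers. -/
  inductive PosTy : Ty → Prop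
    | var (n : ℕ) : PosTy (Ty.var n)
    | arr {B A : Ty} : NegTy B → PosTy A → PosTy (Ty.arr B A)
    | all {A : Ty} : PosTy A → 0 ∈ A.fv → PosTy (Ty.all A)
  /-- ∀⁻ types: types with negative quantifiers. -/
  inductive NegTy : Ty → Prop
    | var (n : ℕ) : NegTy (Ty.var n)
    | arr {B A : Ty} : PosTy B → NegTy A → NegTy (Ty.arr B A)
end

/-- Typing contexts: a partial assignment of types to (de Bruijn) term variables. -/
def Ctx : Type := ℕ → Option Ty

def Ctx.empty : Ctx := fun _ => none

def Ctx.cons (B : Ty) (Γ : Ctx) : Ctx := fun n =>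
  match n with
  | 0 => some B
  | n + 1 => Γ n

/-- Shift all type variables of a context (used for ∀-introduction: the fresh
type variable `0` does not occur in the shifted context). -/
def Ctx.liftTy (Γ : Ctx) : Ctx := fun n => (Γ n).map (Ty.lift 0)

/-- Curry-style typing of System F. -/
inductive TyJ : Ctx → Lam → Ty → Prop
  | var {Γ : Ctx} {x : ℕ} {A : Ty} : Γ x = some A → TyJ Γ (Lam.var x) A
  | lam {Γ : Ctx} {B C : Ty} {t : Lam} :
      TyJ (Ctx.cons B Γ) t C → TyJ Γ (Lam.lam t) (Ty.arr B C)
  | app {Γ : Ctx} {B C : Ty} {u v : Lam} :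
      TyJ Γ u (Ty.arr B C) → TyJ Γ v B → TyJ Γ (Lam.app u v) C
  | allI {Γ : Ctx} {A : Ty} {t : Lam} :
      TyJ (Ctx.liftTy Γ) t A → TyJ Γ t (Ty.all A)
  | allE {Γ : Ctx} {A : Ty} {t : Lam} (C : Ty) :
      TyJ Γ t (Ty.all A) → TyJ Γ t (Ty.subst A 0 C)

/-- System F0 : System F where ∀-elimination only instantiates by type variables. -/
inductive TyJ0 : Ctx → Lam → Ty → Prop
  | var {Γ : Ctx} {x : ℕ} {A : Ty} : Γ x = some A → TyJ0 Γ (Lam.var x) A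
  | lam {Γ : Ctx} {B C : Ty} {t : Lam} :
      TyJ0 (Ctx.cons B Γ) t C → TyJ0 Γ (Lam.lam t) (Ty.arr B C)
  | app {Γ : Ctx} {B C : Ty} {u v : Lam} :
      TyJ0 Γ u (Ty.arr B C) → TyJ0 Γ v B → TyJ0 Γ (Lam.app u v) C
  | allI {Γ : Ctx} {A : Ty} {t : Lam} :
      TyJ0 (Ctx.liftTy Γ) t A → TyJ0 Γ t (Ty.all A)
  | allE {Γ : Ctx} {A : Ty} {t : Lam} (Y : ℕ) :
      TyJ0 Γ t (Ty.all A) → TyJ0 Γ t (Ty.subst A 0 (Ty.var Y))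

/-- Interpretations: assignments of sets of λ-terms to type variables. -/
def Interp : Type := ℕ → Set Lam

def Interp.cons (G : Set Lam) (I : Interp) : Interp := fun n =>
  match n with
  | 0 => G
  | n + 1 => I n

/-- Interpretation of types, parameterized by the admissibility class `C` of
sets used to interpret type variables (e.g. `Saturated`). -/
def interpC (C : Set Lam → Prop) : Ty → Interp → Set Lam
  | Ty.var n, I => I n
  | Ty.arr A B, I => arrowSet (interpC C A I) (interpC C B I)
  | Ty.all A, I => ⋂ (G : Set Lam) (_ : C G), interpC C A (Interp.cons G I)

/-- Girard–Krivine interpretation `|A|_I` with saturated sets. -/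
def interp : Ty → Interp → Set Lam := interpC Saturated

/-- `|A|`, the intersection of `|A|_I` over all admissible interpretations. -/
def SemC (C : Set Lam → Prop) (A : Ty) : Set Lam :=
  {t | ∀ I : Interp, (∀ n, C (I n)) → t ∈ interpC C A I}

/-- `|A| = ⋂_I |A|_I` over interpretations into saturated sets. -/
def Sem (A : Ty) : Set Lam := SemC Saturated A

/-!
Every β-saturated set is saturated, so the saturated interpretation of a ∀⁺ type, whose
quantifiers all occur positively, is contained in the β-saturated one.

For the converse we use a single β-saturated test interpretation: the type variable `m` is
interpreted by the β-expansions of the canonical terms of type `m`, the β-normal terms typed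
without ∀-elimination in a context `γ` that gives every type to infinitely many variables. By
induction on the type, every member of a ∀⁺ type under this interpretation β-reduces to a
canonical term of that type, and the neutral canonical terms of a ∀⁻ type belong to it;
quantifiers only occur positively, so only the first half meets them, and there ∀ is introduced
by a fresh type variable. In the other direction, a term that β-reduces to a canonical term of
type `A` lies in `|A|_I` for every saturated `I`, because weak head standardization turns a
β-reduction to a variable or to an application into a weak head reduction to a term of the same
shape. The free variables of the term are given the type `(∀X X) → X`, which every term
realizes.
-/

def scons {α : Type*} (a : α) (f : ℕ → α) : ℕ → α
  | 0 => a
  | n + 1 => f n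

@[simp] theorem scons_zero {α : Type*} (a : α) (f : ℕ → α) : scons a f 0 = a := rfl

@[simp] theorem scons_succ {α : Type*} (a : α) (f : ℕ → α) (n : ℕ) : scons a f (n + 1) = f n :=
  rfl

@[simp] theorem scons_comp_succ {α : Type*} (a : α) (f : ℕ → α) : scons a f ∘ Nat.succ = f :=
  rfl

def liftRen (ρ : ℕ → ℕ) : ℕ → ℕ := scons 0 (Nat.succ ∘ ρ)

theorem Finset.mem_image_sub_one_erase_zero {s : Finset ℕ} {y : ℕ} :
    y ∈ (s.erase 0).image (· - 1) ↔ y + 1 ∈ s := by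
  simp only [Finset.mem_image, Finset.mem_erase]
  constructor
  · rintro ⟨z, ⟨hz0, hz⟩, rfl⟩
    rwa [Nat.sub_add_cancel (Nat.pos_of_ne_zero hz0)]
  · exact fun h => ⟨y + 1, ⟨y.succ_ne_zero, h⟩, rfl⟩

namespace Lam

def rename (ρ : ℕ → ℕ) : Lam → Lam
  | var n => var (ρ n)
  | app t u => app (rename ρ t) (rename ρ u)
  | lam t => lam (rename (liftRen ρ) t)

def up (σ : ℕ → Lam) : ℕ → Lam := scons (var 0) (rename Nat.succ ∘ σ)

def msubst (σ : ℕ → Lam) : Lam → Lam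
  | var n => σ n
  | app t u => app (msubst σ t) (msubst σ u)
  | lam t => lam (msubst (up σ) t)

theorem msubst_rename (σ : ℕ → Lam) (ρ : ℕ → ℕ) (t : Lam) :
    msubst σ (rename ρ t) = msubst (σ ∘ ρ) t := by
  induction t generalizing σ ρ with
  | var n => rfl
  | app a b iha ihb => simp only [rename, msubst, iha, ihb]
  | lam a ih =>
    simp only [rename, msubst, ih]
    congr 2; funext n; cases n <;> rfl

theorem up_var_comp (ρ : ℕ → ℕ) : up (var ∘ ρ) = var ∘ liftRen ρ := by
  funext n; cases n <;> rfl

theorem rename_eq_msubst (ρ : ℕ → ℕ) (t : Lam) : rename ρ t = msubst (var ∘ ρ) t := by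
  induction t generalizing ρ with
  | var n => rfl
  | app a b iha ihb => simp only [rename, msubst, iha, ihb]
  | lam a ih => simp only [rename, msubst, ih, up_var_comp]

theorem rename_rename (ρ ρ' : ℕ → ℕ) (t : Lam) :
    rename ρ' (rename ρ t) = rename (ρ' ∘ ρ) t := by
  rw [rename_eq_msubst, msubst_rename, rename_eq_msubst]; rfl

theorem rename_msubst (ρ : ℕ → ℕ) (σ : ℕ → Lam) (t : Lam) :
    rename ρ (msubst σ t) = msubst (rename ρ ∘ σ) t := by
  induction t generalizing ρ σ with
  | var n => rfl
  | app a b iha ihb => simp only [msubst, rename, iha, ihb]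
  | lam a ih =>
    simp only [msubst, rename, ih]
    congr 2; funext n
    cases n with
    | zero => rfl
    | succ n => simp only [up, Function.comp_apply, scons_succ, rename_rename]; rfl

theorem msubst_msubst (σ σ' : ℕ → Lam) (t : Lam) :
    msubst σ' (msubst σ t) = msubst (msubst σ' ∘ σ) t := by
  induction t generalizing σ σ' with
  | var n => rfl
  | app a b iha ihb => simp only [msubst, iha, ihb]
  | lam a ih =>
    simp only [msubst, ih]
    congr 2; funext n
    cases n with
    | zero => rfl
    | succ n => simp only [up, Function.comp_apply, scons_succ, msubst_rename, rename_msubst]; rfl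

@[simp] theorem msubst_var (t : Lam) : msubst var t = t := by
  induction t with
  | var n => rfl
  | app a b iha ihb => simp only [msubst, iha, ihb]
  | lam a ih =>
    have : up var = var := by funext n; cases n <;> rfl
    simp only [msubst, this, ih]

theorem lift_eq_rename (d : ℕ) (t : Lam) :
    lift d t = rename (fun n => if n < d then n else n + 1) t := by
  induction t generalizing d with
  | var n => simp only [lift, rename]; split <;> rfl
  | app a b iha ihb => simp only [lift, rename, iha, ihb]
  | lam a ih =>
    simp only [lift, rename, ih]
    congr 2; funext n
    cases n with
    | zero => simp [liftRen]
    | succ n => simp only [liftRen, scons_succ, Function.comp_apply]; split_ifs <;> omega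

theorem lift_zero_eq_rename (t : Lam) : lift 0 t = rename Nat.succ t := by
  simp [lift_eq_rename]

theorem subst_eq_msubst (t : Lam) (k : ℕ) (u : Lam) :
    subst t k u = msubst (fun n => subst (var n) k u) t := by
  induction t generalizing k u with
  | var n => rfl
  | app a b iha ihb => simp only [subst, msubst, iha, ihb]
  | lam a ih =>
    simp only [subst, msubst, ih]
    congr 2; funext n
    cases n with
    | zero => rfl
    | succ n =>
      simp only [up, scons_succ, Function.comp_apply, lift_zero_eq_rename]
      split_ifs <;> first | omega | rfl | (simp only [rename, var.injEq]; omega)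

theorem subst_zero_eq_msubst (t u : Lam) : subst t 0 u = msubst (scons u var) t := by
  rw [subst_eq_msubst]; congr; funext n; cases n <;> rfl

theorem subst_msubst_up (σ : ℕ → Lam) (a b : Lam) :
    subst (msubst (up σ) a) 0 b = msubst (scons b σ) a := by
  rw [subst_zero_eq_msubst, msubst_msubst]
  congr; funext n
  cases n with
  | zero => rfl
  | succ n => simp only [up, Function.comp_apply, scons_succ, msubst_rename]; exact msubst_var _

theorem msubst_subst (σ : ℕ → Lam) (a b : Lam) :
    msubst σ (subst a 0 b) = subst (msubst (up σ) a) 0 (msubst σ b) := by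
  rw [subst_msubst_up, subst_zero_eq_msubst, msubst_msubst]
  congr; funext n; cases n <;> rfl

theorem rename_subst (ρ : ℕ → ℕ) (a b : Lam) :
    rename ρ (subst a 0 b) = subst (rename (liftRen ρ) a) 0 (rename ρ b) := by
  simp only [rename_eq_msubst, msubst_subst, up_var_comp]

theorem mem_fv_lam {x : ℕ} {t : Lam} : x ∈ fv (lam t) ↔ x + 1 ∈ fv t :=
  Finset.mem_image_sub_one_erase_zero

theorem exists_of_mem_fv_rename {x : ℕ} {ρ : ℕ → ℕ} {t : Lam} (h : x ∈ fv (rename ρ t)) :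
    ∃ y ∈ fv t, ρ y = x := by
  induction t generalizing x ρ with
  | var n => exact ⟨n, Finset.mem_singleton_self n, (Finset.mem_singleton.1 h).symm⟩
  | app a b iha ihb =>
    simp only [rename, fv, Finset.mem_union] at h
    rcases h with h | h
    · obtain ⟨y, hy, rfl⟩ := iha h; exact ⟨y, Finset.mem_union_left _ hy, rfl⟩
    · obtain ⟨y, hy, rfl⟩ := ihb h; exact ⟨y, Finset.mem_union_right _ hy, rfl⟩
  | lam a ih =>
    obtain ⟨_ | y, hy, hyx⟩ := ih (mem_fv_lam.1 h)
    · simp [liftRen] at hyx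
    · exact ⟨y, mem_fv_lam.2 hy, Nat.succ_injective hyx⟩

theorem exists_of_mem_fv_msubst {x : ℕ} {σ : ℕ → Lam} {t : Lam} (h : x ∈ fv (msubst σ t)) :
    ∃ y ∈ fv t, x ∈ fv (σ y) := by
  induction t generalizing x σ with
  | var n => exact ⟨n, Finset.mem_singleton_self n, h⟩
  | app a b iha ihb =>
    simp only [msubst, fv, Finset.mem_union] at h
    rcases h with h | h
    · obtain ⟨y, hy, hx⟩ := iha h; exact ⟨y, Finset.mem_union_left _ hy, hx⟩
    · obtain ⟨y, hy, hx⟩ := ihb h; exact ⟨y, Finset.mem_union_right _ hy, hx⟩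
  | lam a ih =>
    obtain ⟨_ | y, hy, hx⟩ := ih (mem_fv_lam.1 h)
    · simp [up, fv] at hx
    · obtain ⟨z, hz, hzx⟩ := exists_of_mem_fv_rename hx
      exact ⟨y, mem_fv_lam.2 hy, Nat.succ_injective hzx ▸ hz⟩

theorem msubst_congr_fv {σ σ' : ℕ → Lam} {t : Lam} (h : ∀ x ∈ fv t, σ x = σ' x) :
    msubst σ t = msubst σ' t := by
  induction t generalizing σ σ' with
  | var n => exact h n (Finset.mem_singleton_self n)
  | app a b iha ihb =>
    simp only [msubst, fv, Finset.mem_union] at h ⊢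
    rw [iha fun x hx => h x (.inl hx), ihb fun x hx => h x (.inr hx)]
  | lam a ih =>
    simp only [msubst]
    congr 1
    refine ih fun x hx => ?_
    cases x with
    | zero => rfl
    | succ x => simp only [up, Function.comp_apply, scons_succ, h x (mem_fv_lam.2 hx)]

theorem rename_update_subst_var {a : Lam} {x : ℕ} (hx : x ∉ fv (lam a)) :
    rename (Function.update Nat.succ x 0) (subst a 0 (var x)) = a := by
  rw [subst_zero_eq_msubst, rename_msubst]
  conv_rhs => rw [← msubst_var a]
  refine msubst_congr_fv fun y hy => ?_
  cases y with
  | zero => simp [rename]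
  | succ y =>
    have : y ≠ x := fun h => hx (mem_fv_lam.2 (h ▸ hy))
    simp [rename, this]

theorem fv_subset_of_beta {t u : Lam} (h : Beta t u) : fv u ⊆ fv t := by
  induction h with
  | beta a b =>
    intro x hx
    obtain ⟨_ | y, hy, hx⟩ := exists_of_mem_fv_msubst (subst_zero_eq_msubst a b ▸ hx)
    · exact Finset.mem_union_right _ hx
    · simp only [scons_succ, fv, Finset.mem_singleton] at hx
      exact Finset.mem_union_left _ (mem_fv_lam.2 (hx ▸ hy))
  | appL u _ ih => exact Finset.union_subset_union ih subset_rfl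
  | appR t _ ih => exact Finset.union_subset_union subset_rfl ih
  | lam _ ih => exact fun x hx => mem_fv_lam.2 (ih (mem_fv_lam.1 hx))

theorem fv_subset_of_betaStar {t u : Lam} (h : BetaStar t u) : fv u ⊆ fv t := by
  induction h with
  | refl => exact subset_rfl
  | tail _ hstep ih => exact (fv_subset_of_beta hstep).trans ih

theorem BetaStar.app_left {t t' : Lam} (u : Lam) (h : BetaStar t t') :
    BetaStar (app t u) (app t' u) :=
  h.lift (app · u) fun _ _ => Beta.appL u

theorem BetaStar.app_right (t : Lam) {u u' : Lam} (h : BetaStar u u') :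
    BetaStar (app t u) (app t u') :=
  h.lift (app t) fun _ _ => Beta.appR t

theorem BetaStar.app {t t' u u' : Lam} (ht : BetaStar t t') (hu : BetaStar u u') :
    BetaStar (app t u) (app t' u') :=
  (ht.app_left u).trans (hu.app_right t')

theorem BetaStar.lam {t t' : Lam} (h : BetaStar t t') : BetaStar (lam t) (lam t') :=
  h.lift Lam.lam fun _ _ => Beta.lam

theorem Beta.msubst {t t' : Lam} (σ : ℕ → Lam) (h : Beta t t') :
    Beta (msubst σ t) (msubst σ t') := by
  induction h generalizing σ with
  | beta a b => rw [msubst_subst]; exact Beta.beta _ _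
  | appL u _ ih => exact Beta.appL _ (ih σ)
  | appR t _ ih => exact Beta.appR _ (ih σ)
  | lam _ ih => exact Beta.lam (ih (up σ))

theorem BetaStar.rename {t t' : Lam} (ρ : ℕ → ℕ) (h : BetaStar t t') :
    BetaStar (rename ρ t) (rename ρ t') :=
  h.lift (Lam.rename ρ) fun _ _ h => by
    simpa only [Function.onFun, rename_eq_msubst] using h.msubst (var ∘ ρ)

theorem BetaStar.app_rename_succ_var_zero {t v : Lam} (h : BetaStar t (Lam.lam v)) :
    BetaStar (Lam.app (Lam.rename Nat.succ t) (var 0)) v := by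
  have hv : subst (Lam.rename (liftRen Nat.succ) v) 0 (var 0) = v := by
    have : scons (var 0) var ∘ liftRen Nat.succ = var := by funext n; cases n <;> rfl
    rw [subst_zero_eq_msubst, msubst_rename, this, msubst_var]
  have hβ := Beta.beta (Lam.rename (liftRen Nat.succ) v) (var 0)
  rw [hv] at hβ
  exact ((h.rename Nat.succ).app_left _).tail hβ

theorem Whr.msubst {t t' : Lam} (σ : ℕ → Lam) (h : Whr t t') :
    Whr (msubst σ t) (msubst σ t') := by
  induction h generalizing σ with
  | head a b => rw [msubst_subst]; exact Whr.head _ _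
  | appL u _ ih => exact Whr.appL _ (ih σ)

theorem WhrStar.msubst {t t' : Lam} (σ : ℕ → Lam) (h : WhrStar t t') :
    WhrStar (msubst σ t) (msubst σ t') :=
  h.lift (Lam.msubst σ) fun _ _ => Whr.msubst σ

theorem WhrStar.app_left {t t' : Lam} (u : Lam) (h : WhrStar t t') :
    WhrStar (app t u) (app t' u) :=
  h.lift (app · u) fun _ _ => Whr.appL u

theorem Whr.beta {t u : Lam} (h : Whr t u) : Beta t u := by
  induction h with
  | head a b => exact Beta.beta a b
  | appL u _ ih => exact Beta.appL u ih

theorem WhrStar.betaStar {t u : Lam} (h : WhrStar t u) : BetaStar t u :=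
  Relation.ReflTransGen.mono (fun _ _ => Whr.beta) _ _ h

theorem eq_var_of_betaStar_var {x : ℕ} {c : Lam} (h : BetaStar (var x) c) : c = var x := by
  induction h with
  | refl => rfl
  | tail _ hstep ih => subst ih; cases hstep

theorem betaStar_app_inv {a b c : Lam} (h : BetaStar (app a b) c) :
    (∃ a' b', c = app a' b' ∧ BetaStar a a' ∧ BetaStar b b') ∨
    (∃ a' b', BetaStar a (lam a') ∧ BetaStar b b' ∧ BetaStar (subst a' 0 b') c) := by
  induction h with
  | refl => exact .inl ⟨a, b, rfl, .refl, .refl⟩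
  | tail _ hstep ih =>
    rcases ih with ⟨a', b', rfl, ha, hb⟩ | ⟨a', b', ha, hb, hc⟩
    · cases hstep with
      | beta s u => exact .inr ⟨s, b', ha, hb, .refl⟩
      | appL u h => exact .inl ⟨_, _, rfl, ha.tail h, hb⟩
      | appR t h => exact .inl ⟨_, _, rfl, ha, hb.tail h⟩
    · exact .inr ⟨a', b', ha, hb, hc.tail hstep⟩

inductive Par : Lam → Lam → Prop
  | var (n : ℕ) : Par (var n) (var n)
  | lam {t t' : Lam} : Par t t' → Par (lam t) (lam t')
  | app {a a' b b' : Lam} : Par a a' → Par b b' → Par (app a b) (app a' b')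
  | beta {a a' b b' : Lam} : Par a a' → Par b b' → Par (app (lam a) b) (subst a' 0 b')

/-- Parallel reduction that contracts no weak head redex. -/
inductive IPar : Lam → Lam → Prop
  | var (n : ℕ) : IPar (var n) (var n)
  | lam {t t' : Lam} : Par t t' → IPar (lam t) (lam t')
  | app {a a' b b' : Lam} : IPar a a' → Par b b' → IPar (app a b) (app a' b')

theorem Par.refl (t : Lam) : Par t t := by
  induction t with
  | var n => exact Par.var n
  | app a b iha ihb => exact Par.app iha ihb
  | lam a ih => exact Par.lam ih

theorem Beta.par {t u : Lam} (h : Beta t u) : Par t u := by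
  induction h with
  | beta a b => exact Par.beta (Par.refl a) (Par.refl b)
  | appL u _ ih => exact Par.app ih (Par.refl u)
  | appR t _ ih => exact Par.app (Par.refl t) ih
  | lam _ ih => exact Par.lam ih

theorem Par.betaStar {t u : Lam} (h : Par t u) : BetaStar t u := by
  induction h with
  | var n => exact .refl
  | lam _ ih => exact ih.lam
  | app _ _ iha ihb => exact iha.app ihb
  | beta _ _ iha ihb => exact (iha.lam.app ihb).tail (Beta.beta _ _)

theorem IPar.par {t u : Lam} (h : IPar t u) : Par t u := by
  induction h with
  | var n => exact Par.var n
  | lam h => exact Par.lam h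
  | app _ hb ih => exact Par.app ih hb

theorem Par.rename {t t' : Lam} (ρ : ℕ → ℕ) (h : Par t t') :
    Par (rename ρ t) (rename ρ t') := by
  induction h generalizing ρ with
  | var n => exact Par.var _
  | lam _ ih => exact Par.lam (ih _)
  | app _ _ iha ihb => exact Par.app (iha ρ) (ihb ρ)
  | beta _ _ iha ihb => rw [rename_subst]; exact Par.beta (iha _) (ihb ρ)

theorem Par.up {σ σ' : ℕ → Lam} (h : ∀ n, Par (σ n) (σ' n)) (n : ℕ) : Par (up σ n) (up σ' n) := by
  cases n with
  | zero => exact Par.var 0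
  | succ n => exact (h n).rename Nat.succ

theorem Par.msubst {t t' : Lam} {σ σ' : ℕ → Lam} (h : Par t t') (hσ : ∀ n, Par (σ n) (σ' n)) :
    Par (msubst σ t) (msubst σ' t') := by
  induction h generalizing σ σ' with
  | var n => exact hσ n
  | lam _ ih => exact Par.lam (ih (Par.up hσ))
  | app _ _ iha ihb => exact Par.app (iha hσ) (ihb hσ)
  | beta _ _ iha ihb => rw [msubst_subst]; exact Par.beta (iha (Par.up hσ)) (ihb hσ)

theorem Par.subst {a a' b b' : Lam} (ha : Par a a') (hb : Par b b') :
    Par (subst a 0 b) (subst a' 0 b') := by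
  rw [subst_zero_eq_msubst, subst_zero_eq_msubst]
  exact ha.msubst fun n => by cases n with
    | zero => exact hb
    | succ n => exact Par.var n

/-- The substitution form of `Par.exists_whrStar_iPar`, which is what makes the `beta` case
go through. -/
theorem Par.exists_whrStar_iPar_msubst {e e' : Lam} {σ σ' : ℕ → Lam} (h : Par e e')
    (hσ : ∀ n, Par (σ n) (σ' n)) (hσ' : ∀ n, ∃ w, WhrStar (σ n) w ∧ IPar w (σ' n)) :
    ∃ u, WhrStar (Lam.msubst σ e) u ∧ IPar u (Lam.msubst σ' e') := by
  induction h generalizing σ σ' with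
  | var n => exact hσ' n
  | lam ht => exact ⟨_, .refl, IPar.lam (ht.msubst (Par.up hσ))⟩
  | app _ hb iha _ =>
    obtain ⟨u, hw, hi⟩ := iha hσ hσ'
    exact ⟨Lam.app u _, hw.app_left _, IPar.app hi (hb.msubst hσ)⟩
  | @beta a a' b b' _ hb iha ihb =>
    obtain ⟨u, hw, hi⟩ := iha (σ := scons (Lam.msubst σ b) σ) (σ' := scons (Lam.msubst σ' b') σ')
      (fun n => by cases n with
        | zero => exact hb.msubst hσ
        | succ n => exact hσ n)
      (fun n => by cases n with
        | zero => exact ihb hσ hσ'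
        | succ n => exact hσ' n)
    refine ⟨u, .head (Whr.head _ _) ?_, ?_⟩
    · rwa [subst_msubst_up]
    · rwa [msubst_subst, subst_msubst_up]

theorem Par.exists_whrStar_iPar {t v : Lam} (h : Par t v) : ∃ u, WhrStar t u ∧ IPar u v := by
  simpa using h.exists_whrStar_iPar_msubst Par.var fun n => ⟨Lam.var n, .refl, IPar.var n⟩

theorem IPar.exists_whr_par {a b c : Lam} (h : IPar a b) (hbc : Whr b c) :
    ∃ d, Whr a d ∧ Par d c := by
  induction h generalizing c with
  | var n => cases hbc
  | lam _ => cases hbc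
  | app ha hb iha =>
    cases hbc with
    | head e' b' => cases ha with
      | lam he => exact ⟨_, Whr.head _ _, he.subst hb⟩
    | appL u h =>
      obtain ⟨d, hw, hp⟩ := iha h
      exact ⟨_, Whr.appL _ hw, Par.app hp hb⟩

theorem Par.exists_whrStar_iPar_of_whrStar {w u v : Lam} (hwu : Par w u) (huv : WhrStar u v) :
    ∃ w', WhrStar w w' ∧ IPar w' v := by
  induction huv using Relation.ReflTransGen.head_induction_on generalizing w with
  | refl => exact hwu.exists_whrStar_iPar
  | head hstep _ ih =>
    obtain ⟨w₁, hw₁, hi₁⟩ := hwu.exists_whrStar_iPar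
    obtain ⟨d, hd, hpd⟩ := hi₁.exists_whr_par hstep
    obtain ⟨w', hw', hi'⟩ := ih hpd
    exact ⟨w', (hw₁.tail hd).trans hw', hi'⟩

theorem BetaStar.exists_whrStar_iParStar {t v : Lam} (h : BetaStar t v) :
    ∃ u, WhrStar t u ∧ Relation.ReflTransGen IPar u v := by
  induction h using Relation.ReflTransGen.head_induction_on with
  | refl => exact ⟨v, .refl, .refl⟩
  | head hstep _ ih =>
    obtain ⟨u, hu, hiu⟩ := ih
    obtain ⟨w, hw, hiw⟩ := hstep.par.exists_whrStar_iPar_of_whrStar hu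
    exact ⟨w, hw, .head hiw hiu⟩

theorem BetaStar.whrStar_var {t : Lam} {x : ℕ} (h : BetaStar t (var x)) :
    WhrStar t (var x) := by
  obtain ⟨u, hu, hi⟩ := h.exists_whrStar_iParStar
  suffices u = var x from this ▸ hu
  clear hu
  induction hi using Relation.ReflTransGen.head_induction_on with
  | refl => rfl
  | head hstep _ ih => subst ih; cases hstep; rfl

theorem BetaStar.exists_whrStar_app {t p a : Lam} (h : BetaStar t (Lam.app p a)) :
    ∃ p' a', WhrStar t (Lam.app p' a') ∧ BetaStar p' p ∧ BetaStar a' a := by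
  obtain ⟨u, hu, hi⟩ := h.exists_whrStar_iParStar
  suffices ∃ p' a', u = Lam.app p' a' ∧ BetaStar p' p ∧ BetaStar a' a by
    obtain ⟨p', a', rfl, hp, ha⟩ := this
    exact ⟨p', a', hu, hp, ha⟩
  clear hu
  induction hi using Relation.ReflTransGen.head_induction_on with
  | refl => exact ⟨p, a, rfl, .refl, .refl⟩
  | head hstep _ ih =>
    obtain ⟨p₁, a₁, rfl, hp, ha⟩ := ih
    cases hstep with
    | app hp' ha' => exact ⟨_, _, rfl, hp'.par.betaStar.trans hp, ha'.betaStar.trans ha⟩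

end Lam

namespace Ty

def rename (θ : ℕ → ℕ) : Ty → Ty
  | var n => var (θ n)
  | arr A B => arr (rename θ A) (rename θ B)
  | all A => all (rename (liftRen θ) A)

theorem rename_rename (θ θ' : ℕ → ℕ) (A : Ty) : (A.rename θ).rename θ' = A.rename (θ' ∘ θ) := by
  induction A generalizing θ θ' with
  | var n => rfl
  | arr A B ihA ihB => simp only [rename, ihA, ihB]
  | all A ih => simp only [rename, ih]; congr 2; funext n; cases n <;> rfl

@[simp] theorem rename_id (A : Ty) : A.rename id = A := by
  induction A with
  | var n => rfl
  | arr A B ihA ihB => simp only [rename, ihA, ihB]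
  | all A ih =>
    have : liftRen id = id := by funext n; cases n <;> rfl
    simp only [rename, this, ih]

theorem mem_fv_all {n : ℕ} {A : Ty} : n ∈ (all A).fv ↔ n + 1 ∈ A.fv :=
  Finset.mem_image_sub_one_erase_zero

theorem mem_fv_rename_of_mem {θ : ℕ → ℕ} {A : Ty} {n : ℕ} (h : n ∈ A.fv) :
    θ n ∈ (A.rename θ).fv := by
  induction A generalizing θ n with
  | var m => simp_all [fv, rename]
  | arr A B ihA ihB =>
    simp only [fv, rename, Finset.mem_union] at h ⊢
    exact h.imp ihA ihB
  | all A ih => exact mem_fv_all.2 (ih (θ := liftRen θ) (mem_fv_all.1 h))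

def encode : Ty → ℕ
  | var n => Nat.pair 0 n
  | arr A B => Nat.pair 1 (Nat.pair A.encode B.encode)
  | all A => Nat.pair 2 A.encode

theorem encode_injective : Function.Injective encode := by
  intro A B h
  induction A generalizing B with
  | var n => cases B <;> simp_all [encode, Nat.pair_eq_pair]
  | arr A₁ A₂ ih₁ ih₂ =>
    cases B with
    | arr B₁ B₂ =>
      simp only [encode, Nat.pair_eq_pair, true_and] at h
      rw [ih₁ h.1, ih₂ h.2]
    | _ => simp [encode, Nat.pair_eq_pair] at h
  | all A ih =>
    cases B with
    | all B => simp only [encode, Nat.pair_eq_pair, true_and] at h; rw [ih h]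
    | _ => simp [encode, Nat.pair_eq_pair] at h

instance : Countable Ty := encode_injective.countable

instance : Nonempty Ty := ⟨var 0⟩

end Ty

theorem interpC_congr (C : Set Lam → Prop) (A : Ty) {I I' : Interp}
    (h : ∀ n ∈ A.fv, I n = I' n) : interpC C A I = interpC C A I' := by
  induction A generalizing I I' with
  | var n => exact h n (Finset.mem_singleton_self n)
  | arr A B ihA ihB =>
    simp only [Ty.fv, Finset.mem_union] at h
    simp only [interpC, ihA fun n hn => h n (.inl hn), ihB fun n hn => h n (.inr hn)]
  | all A ih =>
    simp only [interpC]
    refine Set.iInter₂_congr fun G _ => ih fun n hn => ?_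
    cases n with
    | zero => rfl
    | succ n => exact h n (Ty.mem_fv_all.2 hn)

theorem interpC_rename (C : Set Lam → Prop) (A : Ty) (θ : ℕ → ℕ) (I : ℕ → Set Lam) :
    interpC C (A.rename θ) I = interpC C A (I ∘ θ) := by
  induction A generalizing θ I with
  | var n => rfl
  | arr A B ihA ihB => simp only [Ty.rename, interpC, ihA, ihB]
  | all A ih =>
    refine Set.iInter₂_congr fun G _ => (ih _ _).trans (congrArg _ ?_)
    funext n; cases n <;> rfl

theorem interpC_update_of_notMem (C : Set Lam → Prop) {A : Ty} {Y : ℕ} (hY : Y ∉ A.fv)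
    (I : ℕ → Set Lam) (G : Set Lam) : interpC C A (Function.update I Y G) = interpC C A I :=
  interpC_congr C A fun _ hn => Function.update_of_ne (ne_of_mem_of_not_mem hn hY) G I

theorem interpC_rename_scons_update (C : Set Lam → Prop) {P : Ty} {Y : ℕ}
    (hY : Y ∉ (Ty.all P).fv) (I : ℕ → Set Lam) (G : Set Lam) :
    interpC C (P.rename (scons Y id)) (Function.update I Y G) = interpC C P (Interp.cons G I) := by
  rw [interpC_rename]
  refine interpC_congr C P fun n hn => ?_
  cases n with
  | zero => exact Function.update_self Y G I
  | succ n =>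
    have hnY : n ≠ Y := by rintro rfl; exact hY (Ty.mem_fv_all.2 hn)
    exact Function.update_of_ne hnY G I

theorem interpC_expansion_closed {R : Lam → Lam → Prop}
    (hR : ∀ {t u} s, R t u → R (Lam.app t s) (Lam.app u s)) {C : Set Lam → Prop}
    (hC : ∀ G, C G → ∀ t u, R t u → u ∈ G → t ∈ G) (A : Ty) {I : Interp}
    (hI : ∀ n, ∀ t u, R t u → u ∈ I n → t ∈ I n) :
    ∀ t u, R t u → u ∈ interpC C A I → t ∈ interpC C A I := by
  induction A generalizing I with
  | var n => exact hI n
  | arr A B _ ihB => exact fun t u htu hu s hs => ihB hI _ _ (hR s htu) (hu s hs)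
  | all A ih =>
    intro t u htu hu
    simp only [interpC, Set.mem_iInter] at hu ⊢
    refine fun G hG => ih (fun n => ?_) t u htu (hu G hG)
    cases n with
    | zero => exact hC G hG
    | succ n => exact hI n

theorem interpC_saturated (A : Ty) {I : Interp} (hI : ∀ n, Saturated (I n)) :
    Saturated (interpC Saturated A I) :=
  interpC_expansion_closed (fun s h => h.app_left s) (fun _ h => h) A hI

theorem interpC_betaSaturated (A : Ty) {I : Interp} (hI : ∀ n, BetaSaturated (I n)) :
    BetaSaturated (interpC BetaSaturated A I) :=
  interpC_expansion_closed (fun s h => h.app_left s) (fun _ h => h) A hI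

theorem BetaSaturated.saturated {G : Set Lam} (h : BetaSaturated G) : Saturated G :=
  fun t u htu hu => h t u htu.betaStar hu

theorem interpC_mono {C₁ C₂ : Set Lam → Prop} (hC : ∀ G, C₂ G → C₁ G) (A : Ty) :
    (PosTy A → ∀ I, interpC C₁ A I ⊆ interpC C₂ A I) ∧
    (NegTy A → ∀ I, interpC C₂ A I ⊆ interpC C₁ A I) := by
  induction A with
  | var => exact ⟨fun _ _ => subset_rfl, fun _ _ => subset_rfl⟩
  | arr A B ihA ihB =>
    constructor
    · rintro ⟨⟩ I u hu s hs
      exact (ihB.1 ‹_› I) (hu s ((ihA.2 ‹_› I) hs))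
    · rintro ⟨⟩ I u hu s hs
      exact (ihB.2 ‹_› I) (hu s ((ihA.1 ‹_› I) hs))
  | all A ih =>
    refine ⟨?_, by rintro ⟨⟩⟩
    rintro ⟨⟩ I u hu
    simp only [interpC, Set.mem_iInter] at hu ⊢
    exact fun G hG => ih.1 ‹_› _ (hu G (hC G hG))

theorem PosTy.semC_subset {C₁ C₂ : Set Lam → Prop} {A : Ty} (hA : PosTy A)
    (hC : ∀ G, C₂ G → C₁ G) : SemC C₁ A ⊆ SemC C₂ A :=
  fun _ ht I hI => (interpC_mono hC A).1 hA I (ht I fun n => hC _ (hI n))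

def Lam.Neutral : Lam → Prop
  | lam _ => False
  | _ => True

theorem Lam.Neutral.rename {ρ : ℕ → ℕ} {v : Lam} (h : v.Neutral) : (v.rename ρ).Neutral := by
  cases v <;> simp_all [Neutral, Lam.rename]

/-- `Can γ A v`: `v` is a β-normal term of type `A` when each variable `x` has type `γ x`, in the
fragment of System F with ∀-introduction (by a type variable `Y` fresh for `γ`) but without
∀-elimination. -/
inductive Can : (ℕ → Ty) → Ty → Lam → Prop
  | var (γ : ℕ → Ty) (x : ℕ) : Can γ (γ x) (Lam.var x)
  | app {γ : ℕ → Ty} {Q C : Ty} {p a : Lam} :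
      Can γ (Ty.arr Q C) p → p.Neutral → Can γ Q a → Can γ C (Lam.app p a)
  | lam {γ : ℕ → Ty} {N C : Ty} {v : Lam} :
      Can (scons N γ) C v → Can γ (Ty.arr N C) (Lam.lam v)
  | all {γ : ℕ → Ty} {P : Ty} {Y : ℕ} {v : Lam} :
      0 ∈ P.fv → Y ∉ (Ty.all P).fv → (∀ x ∈ v.fv, Y ∉ (γ x).fv) →
      Can γ (P.rename (scons Y id)) v → Can γ (Ty.all P) v

namespace Can

variable {γ : ℕ → Ty}

theorem exists_head_of_neutral {C : Ty} {v : Lam} (h : Can γ C v) (hv : v.Neutral) :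
    ∃ x ∈ v.fv, C.fv ⊆ (γ x).fv := by
  induction h with
  | var γ x => exact ⟨x, Finset.mem_singleton_self x, subset_rfl⟩
  | app _ hp _ ihp =>
    obtain ⟨x, hx, hsub⟩ := ihp hp
    exact ⟨x, Finset.mem_union_left _ hx, fun n hn => hsub (Finset.mem_union_right _ hn)⟩
  | lam => exact hv.elim
  | all h0 _ hfresh _ ih =>
    obtain ⟨x, hx, hsub⟩ := ih hv
    exact absurd (hsub (Ty.mem_fv_rename_of_mem h0)) (hfresh x hx)

/-- Neutral terms cannot be typed by the `all` rule: the head variable would have to mention the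
fresh type variable. -/
theorem not_all_of_neutral {P : Ty} {Y : ℕ} {v : Lam} (h0 : 0 ∈ P.fv)
    (hfresh : ∀ x ∈ v.fv, Y ∉ (γ x).fv) (h : Can γ (P.rename (scons Y id)) v) (hv : v.Neutral) :
    False := by
  obtain ⟨x, hx, hsub⟩ := h.exists_head_of_neutral hv
  exact hfresh x hx (hsub (Ty.mem_fv_rename_of_mem h0))

theorem app_inv {C : Ty} {p a : Lam} (h : Can γ C (Lam.app p a)) :
    ∃ Q, Can γ (Ty.arr Q C) p ∧ Can γ Q a := by
  cases h with
  | app hp _ ha => exact ⟨_, hp, ha⟩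
  | all h0 _ hfresh h => exact (not_all_of_neutral h0 hfresh h trivial).elim

theorem var_inv {C : Ty} {x : ℕ} (h : Can γ C (Lam.var x)) : C = γ x := by
  cases h with
  | var => rfl
  | all h0 _ hfresh h => exact (not_all_of_neutral h0 hfresh h trivial).elim

theorem rename {γ' : ℕ → Ty} {C : Ty} {v : Lam} {ρ : ℕ → ℕ} (h : Can γ C v)
    (hρ : ∀ y ∈ v.fv, γ' (ρ y) = γ y) : Can γ' C (v.rename ρ) := by
  induction h generalizing γ' ρ with
  | var γ x => rw [← hρ x (Finset.mem_singleton_self x)]; exact Can.var γ' (ρ x)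
  | app _ hp _ ihp iha =>
    exact Can.app (ihp fun y hy => hρ y (Finset.mem_union_left _ hy)) hp.rename
      (iha fun y hy => hρ y (Finset.mem_union_right _ hy))
  | lam _ ih =>
    refine Can.lam (ih fun y hy => ?_)
    cases y with
    | zero => rfl
    | succ y => exact hρ y (Lam.mem_fv_lam.2 hy)
  | all h0 hY hfresh _ ih =>
    refine Can.all h0 hY (fun x hx => ?_) (ih hρ)
    obtain ⟨y, hy, rfl⟩ := Lam.exists_of_mem_fv_rename hx
    exact hρ y hy ▸ hfresh y hy

/-- Either the reduct keeps the shape `(c)x`, or `u` reduces to an abstraction whose body is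
recovered by turning `x` back into the bound variable. -/
theorem exists_arr_of_app_var {C : Ty} {u c : Lam} {x : ℕ} (hx : x ∉ u.fv)
    (huc : Lam.BetaStar (Lam.app u (Lam.var x)) c) (hc : Can γ C c) :
    ∃ c', Lam.BetaStar u c' ∧ Can γ (Ty.arr (γ x) C) c' := by
  rcases Lam.betaStar_app_inv huc with ⟨c₁, c₂, rfl, hu, hx₂⟩ | ⟨a, b, hua, hxb, hsub⟩
  · rw [Lam.eq_var_of_betaStar_var hx₂] at hc
    obtain ⟨Q, hc₁, hQ⟩ := hc.app_inv
    exact ⟨c₁, hu, hQ.var_inv ▸ hc₁⟩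
  · rw [Lam.eq_var_of_betaStar_var hxb] at hsub
    have hxa : x ∉ (Lam.lam a).fv := fun h => hx (Lam.fv_subset_of_betaStar hua h)
    have hac := hsub.rename (Function.update Nat.succ x 0)
    rw [Lam.rename_update_subst_var hxa] at hac
    refine ⟨_, hua.trans hac.lam, Can.lam (hc.rename fun y _ => ?_)⟩
    rcases eq_or_ne y x with rfl | hy
    · simp
    · simp [hy]

end Can

def testInterp (γ : ℕ → Ty) : Interp := fun m => {t | ∃ v, Lam.BetaStar t v ∧ Can γ (Ty.var m) v}

theorem testInterp_betaSaturated (γ : ℕ → Ty) (m : ℕ) : BetaSaturated (testInterp γ m) :=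
  fun _ _ htu ⟨v, huv, hv⟩ => ⟨v, htu.trans huv, hv⟩

def FreshCtx (γ : ℕ → Ty) : Prop := ∀ (N : Ty) (s : Finset ℕ), ∃ x ∉ s, γ x = N

theorem exists_freshCtx (s : Finset ℕ) (B : Ty) : ∃ γ, FreshCtx γ ∧ ∀ x ∈ s, γ x = B := by
  classical
  obtain ⟨e, he⟩ := exists_surjective_nat Ty
  refine ⟨fun x => if x ∈ s then B else e x.unpair.2, fun N s' => ?_, fun x hx => if_pos hx⟩
  obtain ⟨n, rfl⟩ := he N
  have hinf : (Set.range fun k => Nat.pair k n).Infinite :=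
    Set.infinite_range_of_injective fun k k' h => (Nat.pair_eq_pair.1 h).1
  obtain ⟨_, ⟨k, rfl⟩, hk⟩ := hinf.exists_notMem_finset (s ∪ s')
  rw [Finset.mem_union, not_or] at hk
  exact ⟨_, hk.2, by simp [hk.1]⟩

/-- Generalized over renamings `θ` because the `∀` case instantiates the bound variable by a
fresh one. -/
theorem interpC_testInterp_adequate {γ : ℕ → Ty} (hγ : FreshCtx γ) (A : Ty) (θ : ℕ → ℕ) :
    (PosTy A → ∀ u ∈ interpC BetaSaturated A (testInterp γ ∘ θ),
      ∃ c, Lam.BetaStar u c ∧ Can γ (A.rename θ) c) ∧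
    (NegTy A → ∀ p, Can γ (A.rename θ) p → p.Neutral →
      p ∈ interpC BetaSaturated A (testInterp γ ∘ θ)) := by
  induction A generalizing θ with
  | var m => exact ⟨fun _ _ hu => hu, fun _ p hp _ => ⟨p, .refl, hp⟩⟩
  | arr B D ihB ihD =>
    constructor
    · rintro ⟨⟩ u hu
      obtain ⟨x, hx, hγx⟩ := hγ (B.rename θ) u.fv
      have hxB := (ihB θ).2 ‹_› (Lam.var x) (hγx ▸ Can.var γ x) trivial
      obtain ⟨c, huc, hc⟩ := (ihD θ).1 ‹_› _ (hu _ hxB)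
      obtain ⟨c', huc', hc'⟩ := hc.exists_arr_of_app_var hx huc
      rw [hγx] at hc'
      exact ⟨c', huc', hc'⟩
    · rintro ⟨⟩ p hp hpn s hs
      obtain ⟨c, hsc, hc⟩ := (ihB θ).1 ‹_› s hs
      exact interpC_betaSaturated D (fun n => testInterp_betaSaturated γ _) _ _
        (hsc.app_right p) ((ihD θ).2 ‹_› _ (Can.app hp hpn hc) trivial)
  | all P ih =>
    refine ⟨?_, by rintro ⟨⟩⟩
    rintro ⟨⟩ u hu
    rename_i hP h0
    obtain ⟨Y, hY⟩ := Infinite.exists_notMem_finset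
      (((Ty.all P).rename θ).fv ∪ u.fv.biUnion fun x => (γ x).fv)
    simp only [Finset.mem_union, Finset.mem_biUnion, not_or, not_exists, not_and] at hY
    have hcons : Interp.cons (testInterp γ Y) (testInterp γ ∘ θ) = testInterp γ ∘ scons Y θ := by
      funext n; cases n <;> rfl
    have hu' := Set.mem_iInter₂.1 hu (testInterp γ Y) (testInterp_betaSaturated γ Y)
    rw [hcons] at hu'
    obtain ⟨c, huc, hc⟩ := (ih (scons Y θ)).1 hP u hu'
    refine ⟨c, huc, Can.all (Ty.mem_fv_rename_of_mem h0) hY.1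
      (fun x hx => hY.2 x (Lam.fv_subset_of_betaStar huc hx)) ?_⟩
    have hθ : scons Y id ∘ liftRen θ = scons Y θ := by funext n; cases n <;> rfl
    rwa [Ty.rename_rename, hθ]

theorem Can.msubst_mem_interpC {γ : ℕ → Ty} {A : Ty} {v : Lam} (h : Can γ A v)
    {I : ℕ → Set Lam} (hI : ∀ n, Saturated (I n)) {τ : ℕ → Lam}
    (hτ : ∀ x ∈ v.fv, τ x ∈ interpC Saturated (γ x) I) {t : Lam} (ht : Lam.BetaStar t v) :
    Lam.msubst τ t ∈ interpC Saturated A I := by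
  induction h generalizing I τ t with
  | var γ x =>
    exact interpC_saturated _ hI _ _ (ht.whrStar_var.msubst τ) (hτ x (Finset.mem_singleton_self x))
  | app _ _ _ ihp iha =>
    obtain ⟨p', a', hw, hp, ha⟩ := ht.exists_whrStar_app
    exact interpC_saturated _ hI _ _ (hw.msubst τ)
      (ihp hI (fun x hx => hτ x (Finset.mem_union_left _ hx)) hp _
        (iha hI (fun x hx => hτ x (Finset.mem_union_right _ hx)) ha))
  | lam _ ih =>
    intro s hs
    have := ih hI (τ := scons s τ) (fun x hx => ?_) ht.app_rename_succ_var_zero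
    · simpa only [Lam.msubst, Lam.msubst_rename, scons_comp_succ, scons_zero] using this
    · cases x with
      | zero => exact hs
      | succ x => exact hτ x (Lam.mem_fv_lam.2 hx)
  | @all γ P Y v _ hY hfresh _ ih =>
    simp only [interpC, Set.mem_iInter]
    intro G hG
    have hI' : ∀ n, Saturated (Function.update I Y G n) := by
      intro n
      rcases eq_or_ne n Y with rfl | hn
      · rwa [Function.update_self]
      · rw [Function.update_of_ne hn]; exact hI n
    have hτ' : ∀ x ∈ v.fv, τ x ∈ interpC Saturated (γ x) (Function.update I Y G) := fun x hx => by
      rw [interpC_update_of_notMem _ (hfresh x hx)]; exact hτ x hx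
    simpa only [interpC_rename_scons_update _ hY] using ih hI' hτ' ht

/-- `∅` is saturated, so `|∀X X|` is empty. -/
theorem mem_interpC_saturated_all_var_arr (I : Interp) (t : Lam) :
    t ∈ interpC Saturated (Ty.arr (Ty.all (Ty.var 0)) (Ty.var 0)) I := by
  intro s hs
  simp only [interpC, Set.mem_iInter] at hs
  exact absurd (hs ∅ fun _ _ _ h => h) id

theorem PosTy.semC_betaSaturated_subset {A : Ty} (hA : PosTy A) :
    SemC BetaSaturated A ⊆ SemC Saturated A := by
  intro t ht I hI
  obtain ⟨γ, hγ, hγt⟩ := exists_freshCtx t.fv (Ty.arr (Ty.all (Ty.var 0)) (Ty.var 0))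
  obtain ⟨c, htc, hc⟩ :=
    (interpC_testInterp_adequate hγ A id).1 hA t (ht _ (testInterp_betaSaturated γ))
  have := hc.msubst_mem_interpC hI (τ := Lam.var) (fun x hx => ?_) htc
  · simpa using this
  · rw [hγt x (Lam.fv_subset_of_betaStar htc hx)]
    exact mem_interpC_saturated_all_var_arr I _

/-- for every ∀⁺ type `A`, the saturated and β-saturated
interpretations of `A` coincide. -/
theorem sem_saturated_eq_betaSaturated (A : Ty) (hA : PosTy A) :
    SemC Saturated A = SemC BetaSaturated A :=
  (hA.semC_subset fun _ => BetaSaturated.saturated).antisymm hA.semC_betaSaturated_subset
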